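/- arXiv:1601.00175 — 2 statements merged into one kernel-verified Lean document; each statement's English description precedes it below -/
import Mathlib

section
/- Let L₁, L₂ > 0, let Ω be the set of ω ∈ C([0,T],ℝ) such that −L₁(t−s) ≤ ω(t) − ω(s) ≤ L₂(t−s) for all 0 ≤ s < t ≤ T, let ψ(s,ω) = L₂(T−s), and define σ*(ω) = inf{s ∈ [0,T] : X*_s(ω) − X_s(ω) ≥ L₂(T−s)}. Then for every t ∈ [0,T] and ω ∈ Ω with σ*(ω) ≥ t, the optimal worst-case estimated regret equals a convex combination of the regret over the past and the estimated regret over the future: inf over all stopping times τ with τ(ω')≥t for all ω'∈𝒜(t,ω) of ℛ(t,ω;τ) = ℛ(t,ω;σ*) = [L₂/(L₁+L₂)]·(X*_t(ω) − X_t(ω)) + [L₁/(L₁+L₂)]·L₂·(T−t). -/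
open Set

noncomputable section

namespace SellingRegret

/-- Running maximum `X*_t(ω) = sup_{s ∈ [0,t]} X_s(ω)`, where `X_s(ω) = ω s`. -/
def Mstar (ω : ℝ → ℝ) (t : ℝ) : ℝ :=
  sSup (ω '' Set.Icc 0 t)

/-- `𝒜(t,ω)`: the trajectories in `Ω` agreeing with `ω` on `[0,t]`. -/
def Hist (Ω : Set (ℝ → ℝ)) (t : ℝ) (ω : ℝ → ℝ) : Set (ℝ → ℝ) :=
  {ω' ∈ Ω | ∀ s ∈ Set.Icc 0 t, ω' s = ω s}

/-- A stopping time: a map `τ : Ω → [0,T]` such that whenever `τ(ω) ≤ t` and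
`ω'` agrees with `ω` on `[0,t]`, one has `τ(ω') = τ(ω)`. -/
def IsStoppingTime (T : ℝ) (Ω : Set (ℝ → ℝ)) (τ : (ℝ → ℝ) → ℝ) : Prop :=
  (∀ ω ∈ Ω, τ ω ∈ Set.Icc 0 T) ∧
  ∀ ω ∈ Ω, ∀ t ∈ Set.Icc 0 T, τ ω ≤ t →
    ∀ ω' ∈ Ω, (∀ s ∈ Set.Icc 0 t, ω' s = ω s) → τ ω' = τ ω

/-- Estimated regret `R(t,ω;τ,ω') = max{X*_{τ(ω')}(ω') − X_{τ(ω')}(ω'), ψ(τ(ω'),ω')}`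
(it depends only on `τ` and `ω'`). -/
def regret (ψ : ℝ → (ℝ → ℝ) → ℝ) (τ : (ℝ → ℝ) → ℝ) (ω' : ℝ → ℝ) : ℝ :=
  max (Mstar ω' (τ ω') - ω' (τ ω')) (ψ (τ ω') ω')

/-- Worst-case estimated regret `ℛ(t,ω;τ) = sup_{ω' ∈ 𝒜(t,ω)} R(t,ω;τ,ω')`,
valued in `[0,∞]`. -/
def worstRegret (Ω : Set (ℝ → ℝ)) (ψ : ℝ → (ℝ → ℝ) → ℝ)
    (t : ℝ) (ω : ℝ → ℝ) (τ : (ℝ → ℝ) → ℝ) : ENNReal :=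
  ⨆ ω' ∈ Hist Ω t ω, ENNReal.ofReal (regret ψ τ ω')

/-- `σ*(ω) = inf {s ∈ [0,T] : X*_s(ω) − X_s(ω) ≥ ψ(s,ω)}`. -/
def sigmaStar (T : ℝ) (ψ : ℝ → (ℝ → ℝ) → ℝ) (ω : ℝ → ℝ) : ℝ :=
  sInf {s ∈ Set.Icc 0 T | ψ s ω ≤ Mstar ω s - ω s}

/-- `τ ∈ 𝒯_t(ω)`: `τ(ω') ≥ t` for all `ω' ∈ 𝒜(t,ω)`. -/
def Admissible (Ω : Set (ℝ → ℝ)) (t : ℝ) (ω : ℝ → ℝ) (τ : (ℝ → ℝ) → ℝ) : Prop :=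
  ∀ ω' ∈ Hist Ω t ω, t ≤ τ ω'

/-- `σ` is optimal with respect to `𝒜(t,ω)`. -/
def OptimalAt (T : ℝ) (Ω : Set (ℝ → ℝ)) (ψ : ℝ → (ℝ → ℝ) → ℝ)
    (t : ℝ) (ω : ℝ → ℝ) (σ : (ℝ → ℝ) → ℝ) : Prop :=
  IsStoppingTime T Ω σ ∧ Admissible Ω t ω σ ∧
  ∀ τ, IsStoppingTime T Ω τ → Admissible Ω t ω τ →
    worstRegret Ω ψ t ω σ ≤ worstRegret Ω ψ t ω τ

/-- `σ` is Pareto optimal with respect to `𝒜(t,ω)`. -/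
def ParetoOptimalAt (T : ℝ) (Ω : Set (ℝ → ℝ)) (ψ : ℝ → (ℝ → ℝ) → ℝ)
    (t : ℝ) (ω : ℝ → ℝ) (σ : (ℝ → ℝ) → ℝ) : Prop :=
  IsStoppingTime T Ω σ ∧ Admissible Ω t ω σ ∧
  ¬ ∃ τ, IsStoppingTime T Ω τ ∧ Admissible Ω t ω τ ∧
      (∀ ω' ∈ Hist Ω t ω, regret ψ τ ω' ≤ regret ψ σ ω') ∧
      ∃ ω'' ∈ Hist Ω t ω, regret ψ τ ω'' < regret ψ σ ω''

/-- `σ` is perfect: optimal and Pareto optimal with respect to `𝒜(t,ω)`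
whenever it is admissible for `𝒜(t,ω)`. -/
def Perfect (T : ℝ) (Ω : Set (ℝ → ℝ)) (ψ : ℝ → (ℝ → ℝ) → ℝ)
    (σ : (ℝ → ℝ) → ℝ) : Prop :=
  IsStoppingTime T Ω σ ∧
  ∀ t ∈ Set.Icc 0 T, ∀ ω ∈ Ω, Admissible Ω t ω σ →
    OptimalAt T Ω ψ t ω σ ∧ ParetoOptimalAt T Ω ψ t ω σ

/-- Conditions (A) and (B) of Theorem 2 for a stopping time `σ`. -/
def CondAB (T : ℝ) (Ω : Set (ℝ → ℝ)) (ψ : ℝ → (ℝ → ℝ) → ℝ)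
    (σ : (ℝ → ℝ) → ℝ) : Prop :=
  ∀ τ, IsStoppingTime T Ω τ → ∀ ω ∈ Ω,
    (σ ω < τ ω → ∃ ω' ∈ Hist Ω (σ ω) ω, regret ψ σ ω' < regret ψ τ ω') ∧
    (τ ω < σ ω → ∀ ω' ∈ Hist Ω (τ ω) ω, regret ψ σ ω' < regret ψ τ ω')

/-- `Ω = C([0,T],ℝ)`: all trajectories continuous on `[0,T]`. -/
def OmegaC (T : ℝ) : Set (ℝ → ℝ) :=
  {ω | ContinuousOn ω (Set.Icc 0 T)}

/-- The two-sided Lipschitz corridor of Example 2: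
`−L₁(t−s) ≤ ω(t) − ω(s) ≤ L₂(t−s)` for `0 ≤ s ≤ t ≤ T`. -/
def OmegaL (T L₁ L₂ : ℝ) : Set (ℝ → ℝ) :=
  {ω | ∀ s t : ℝ, 0 ≤ s → s ≤ t → t ≤ T →
    -L₁ * (t - s) ≤ ω t - ω s ∧ ω t - ω s ≤ L₂ * (t - s)}

section Aux
variable {T L₁ L₂ : ℝ}

lemma bddAbove_img (hL₁ : 0 ≤ L₁) {ω : ℝ → ℝ} (hω : ω ∈ OmegaL T L₁ L₂)
    {s : ℝ} (h0 : 0 ≤ s) (hsT : s ≤ T) : BddAbove (ω '' Set.Icc 0 s) := by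
  refine ⟨ω s + L₁ * s, ?_⟩
  rintro x ⟨u, ⟨hu0, hus⟩, rfl⟩
  have := (hω u s hu0 hus hsT).1
  nlinarith

lemma le_mstar (hL₁ : 0 ≤ L₁) {ω : ℝ → ℝ} (hω : ω ∈ OmegaL T L₁ L₂)
    {s u : ℝ} (hu0 : 0 ≤ u) (hus : u ≤ s) (hsT : s ≤ T) : ω u ≤ Mstar ω s :=
  le_csSup (bddAbove_img hL₁ hω (hu0.trans hus) hsT) ⟨u, ⟨hu0, hus⟩, rfl⟩

lemma mstar_le {ω : ℝ → ℝ} {s c : ℝ} (h0 : 0 ≤ s)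
    (h : ∀ u ∈ Set.Icc (0:ℝ) s, ω u ≤ c) : Mstar ω s ≤ c :=
  csSup_le (by exact ⟨ω s, s, ⟨h0, le_rfl⟩, rfl⟩) (by rintro x ⟨u, hu, rfl⟩; exact h u hu)

lemma gap_nonneg (hL₁ : 0 ≤ L₁) {ω : ℝ → ℝ} (hω : ω ∈ OmegaL T L₁ L₂)
    {s : ℝ} (h0 : 0 ≤ s) (hsT : s ≤ T) : 0 ≤ Mstar ω s - ω s :=
  sub_nonneg.2 (le_mstar hL₁ hω h0 le_rfl hsT)

lemma mstar_congr {ω ω' : ℝ → ℝ} {t s : ℝ}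
    (hag : ∀ u ∈ Set.Icc (0:ℝ) t, ω' u = ω u) (hst : s ≤ t) :
    Mstar ω' s = Mstar ω s := by
  unfold Mstar
  congr 1
  exact Set.image_congr fun u hu => hag u ⟨hu.1, hu.2.trans hst⟩

lemma mstar_zero {ω : ℝ → ℝ} : Mstar ω 0 = ω 0 := by
  unfold Mstar
  rw [Set.Icc_self, Set.image_singleton, csSup_singleton]

lemma gapGrowth (hL₁ : 0 ≤ L₁) {ω : ℝ → ℝ} (hω : ω ∈ OmegaL T L₁ L₂)
    {a b : ℝ} (ha : 0 ≤ a) (hab : a ≤ b) (hbT : b ≤ T) :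
    Mstar ω b - ω b ≤ (Mstar ω a - ω a) + L₁ * (b - a) := by
  have hga := gap_nonneg hL₁ hω ha (hab.trans hbT)
  have key : Mstar ω b ≤ ω b + (Mstar ω a - ω a) + L₁ * (b - a) := by
    apply mstar_le (ha.trans hab)
    rintro u ⟨hu0, hub⟩
    rcases le_total u a with hua | hau
    · have h1 : ω u ≤ Mstar ω a := le_mstar hL₁ hω hu0 hua (hab.trans hbT)
      have h2 := (hω a b ha hab hbT).1
      nlinarith
    · have h2 := (hω u b hu0 hub hbT).1
      nlinarith
  linarith

/-- The hitting set of `sigmaStar` for `ψ s ω = L₂(T-s)`. -/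
def Sset (T L₂ : ℝ) (ω : ℝ → ℝ) : Set ℝ :=
  {s ∈ Set.Icc 0 T | L₂ * (T - s) ≤ Mstar ω s - ω s}

lemma Sset_bddBelow (ω : ℝ → ℝ) : BddBelow (Sset T L₂ ω) :=
  ⟨0, fun s hs => hs.1.1⟩

lemma T_mem_Sset (hT : 0 ≤ T) (hL₁ : 0 ≤ L₁) {ω : ℝ → ℝ} (hω : ω ∈ OmegaL T L₁ L₂) :
    T ∈ Sset T L₂ ω := by
  refine ⟨⟨hT, le_rfl⟩, ?_⟩
  have := gap_nonneg hL₁ hω hT le_rfl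
  simp only [sub_self, mul_zero]
  linarith

lemma Sset_nonempty (hT : 0 ≤ T) (hL₁ : 0 ≤ L₁) {ω : ℝ → ℝ} (hω : ω ∈ OmegaL T L₁ L₂) :
    (Sset T L₂ ω).Nonempty := ⟨T, T_mem_Sset hT hL₁ hω⟩

lemma sigma_mem_Icc (hT : 0 ≤ T) (hL₁ : 0 ≤ L₁) {ω : ℝ → ℝ} (hω : ω ∈ OmegaL T L₁ L₂) :
    sInf (Sset T L₂ ω) ∈ Set.Icc 0 T :=
  ⟨le_csInf (Sset_nonempty hT hL₁ hω) fun s hs => hs.1.1,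
   csInf_le (Sset_bddBelow ω) (T_mem_Sset hT hL₁ hω)⟩

/-- At the infimum the inequality holds (`f(σ*) ≥ 0`). -/
lemma gap_ge_at_sigma (hT : 0 ≤ T) (hL₁ : 0 < L₁) (hL₂ : 0 < L₂)
    {ω : ℝ → ℝ} (hω : ω ∈ OmegaL T L₁ L₂) :
    L₂ * (T - sInf (Sset T L₂ ω)) ≤ Mstar ω (sInf (Sset T L₂ ω)) - ω (sInf (Sset T L₂ ω)) := by
  set σ := sInf (Sset T L₂ ω) with hσdef
  have hσI := sigma_mem_Icc hT hL₁.le hω (L₂ := L₂)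
  have hsum : (0:ℝ) < L₁ + L₂ := by linarith
  refine le_of_forall_pos_le_add fun δ hδ => ?_
  obtain ⟨s, hsS, hslt⟩ := Real.lt_sInf_add_pos (Sset_nonempty hT hL₁.le hω)
    (div_pos hδ hsum)
  have hσs : σ ≤ s := csInf_le (Sset_bddBelow ω) hsS
  have hgg := gapGrowth hL₁.le hω hσI.1 hσs hsS.1.2
  have h2 : s - σ ≤ δ / (L₁ + L₂) := by linarith
  have h3 := hsS.2
  have h4 : (L₁ + L₂) * (s - σ) ≤ δ := by
    have := mul_le_mul_of_nonneg_left h2 hsum.le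
    rwa [mul_div_cancel₀ δ (ne_of_gt hsum)] at this
  nlinarith

/-- `σ* ∈ Sset`. -/
lemma sigma_mem_Sset (hT : 0 ≤ T) (hL₁ : 0 < L₁) (hL₂ : 0 < L₂)
    {ω : ℝ → ℝ} (hω : ω ∈ OmegaL T L₁ L₂) :
    sInf (Sset T L₂ ω) ∈ Sset T L₂ ω :=
  ⟨sigma_mem_Icc hT hL₁.le hω, gap_ge_at_sigma hT hL₁ hL₂ hω⟩

/-- Whenever `t ≤ σ*` and `t ∈ [0,T]`, the gap is at most `L₂(T-t)` (`f(t) ≤ 0`). -/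
lemma gap_le_of_le_sigma (hT : 0 < T) (hL₁ : 0 < L₁) (hL₂ : 0 < L₂)
    {ω : ℝ → ℝ} (hω : ω ∈ OmegaL T L₁ L₂) {t : ℝ} (ht : t ∈ Set.Icc 0 T)
    (hσ : t ≤ sInf (Sset T L₂ ω)) :
    Mstar ω t - ω t ≤ L₂ * (T - t) := by
  rcases eq_or_lt_of_le ht.1 with h0 | h0
  · rw [← h0, mstar_zero]
    simp only [sub_self, sub_zero]
    positivity
  have hsum : (0:ℝ) < L₁ + L₂ := by linarith
  refine le_of_forall_pos_le_add fun δ hδ => ?_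
  set s := max 0 (t - δ / (L₁ + L₂)) with hsdef
  have hs0 : 0 ≤ s := le_max_left _ _
  have hst : s < t := max_lt h0 (by have := div_pos hδ hsum; linarith)
  have hnot : s ∉ Sset T L₂ ω := fun hs =>
    absurd (csInf_le (Sset_bddBelow ω) hs) (by linarith [hσ, hst] : ¬ sInf (Sset T L₂ ω) ≤ s)
  have hsI : s ∈ Set.Icc 0 T := ⟨hs0, hst.le.trans ht.2⟩
  have hlt : Mstar ω s - ω s < L₂ * (T - s) := by
    by_contra h
    exact hnot ⟨hsI, le_of_not_gt h⟩
  have hgg := gapGrowth hL₁.le hω hs0 hst.le ht.2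
  have h2 : t - s ≤ δ / (L₁ + L₂) := by
    have : t - δ / (L₁ + L₂) ≤ s := le_max_right _ _
    linarith
  have h4 : (L₁ + L₂) * (t - s) ≤ δ := by
    have := mul_le_mul_of_nonneg_left h2 hsum.le
    rwa [mul_div_cancel₀ δ (ne_of_gt hsum)] at this
  nlinarith

/-- Extension of `ω` after time `a` by a ray of slope `c`. -/
def ray (ω : ℝ → ℝ) (a c : ℝ) : ℝ → ℝ := fun s => ω (min s a) + c * (max s a - a)

lemma ray_eq_left {ω : ℝ → ℝ} {a c s : ℝ} (h : s ≤ a) : ray ω a c s = ω s := by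
  simp [ray, min_eq_left h, max_eq_right h]

lemma ray_eq_right {ω : ℝ → ℝ} {a c s : ℝ} (h : a ≤ s) :
    ray ω a c s = ω a + c * (s - a) := by
  simp [ray, min_eq_right h, max_eq_left h]

lemma ray_mem {ω : ℝ → ℝ} (hω : ω ∈ OmegaL T L₁ L₂) {a c : ℝ}
    (ha : 0 ≤ a) (haT : a ≤ T) (hc1 : -L₁ ≤ c) (hc2 : c ≤ L₂) :
    ray ω a c ∈ OmegaL T L₁ L₂ := by
  intro s u hs hsu huT
  have h1 := hω (min s a) (min u a) (le_min hs ha) (min_le_min_right a hsu)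
    ((min_le_left u a).trans huT)
  have hd2 : max s a ≤ max u a := max_le_max_right a hsu
  have hkey : (min u a - min s a) + (max u a - max s a) = u - s := by
    have e1 : min s a + max s a = s + a := min_add_max s a
    have e2 : min u a + max u a = u + a := min_add_max u a
    linarith
  have hd1 : 0 ≤ min u a - min s a := by
    have := min_le_min_right a hsu; linarith
  have hray : ray ω a c u - ray ω a c s
      = (ω (min u a) - ω (min s a)) + c * (max u a - max s a) := by
    simp only [ray]; ring
  have hcd1 : -L₁ * (max u a - max s a) ≤ c * (max u a - max s a) :=
    mul_le_mul_of_nonneg_right hc1 (by linarith)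
  have hcd2 : c * (max u a - max s a) ≤ L₂ * (max u a - max s a) :=
    mul_le_mul_of_nonneg_right hc2 (by linarith)
  have e1 : -L₁ * (min u a - min s a) + -L₁ * (max u a - max s a) = -L₁ * (u - s) := by
    rw [← hkey]; ring
  have e2 : L₂ * (min u a - min s a) + L₂ * (max u a - max s a) = L₂ * (u - s) := by
    rw [← hkey]; ring
  constructor
  · rw [hray]; linarith [h1.1]
  · rw [hray]; linarith [h1.2]

/-- For a downward ray after `a`, the running max freezes at `a`. -/
lemma mstar_ray (hL₁ : 0 ≤ L₁) {ω : ℝ → ℝ} (hω : ω ∈ OmegaL T L₁ L₂) {a c : ℝ}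
    (hr : ray ω a c ∈ OmegaL T L₁ L₂)
    (ha : 0 ≤ a) (hc : c ≤ 0) {s : ℝ} (has : a ≤ s) (hsT : s ≤ T) :
    Mstar (ray ω a c) s = Mstar ω a := by
  apply le_antisymm
  · apply mstar_le (ha.trans has)
    rintro u ⟨hu0, hus⟩
    rcases le_total u a with hua | hau
    · rw [ray_eq_left hua]
      exact le_mstar hL₁ hω hu0 hua (has.trans hsT)
    · rw [ray_eq_right hau]
      have : c * (u - a) ≤ 0 := mul_nonpos_of_nonpos_of_nonneg hc (by linarith)
      have := le_mstar hL₁ hω ha le_rfl (has.trans hsT)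
      linarith
  · apply mstar_le ha
    rintro u ⟨hu0, hua⟩
    have := le_mstar hL₁ hr hu0 (hua.trans has) hsT
    rwa [ray_eq_left hua] at this

lemma sigmaStar_eq_sInf (ω : ℝ → ℝ) :
    sigmaStar T (fun s _ => L₂ * (T - s)) ω = sInf (Sset T L₂ ω) := rfl

/-- `Sset` only depends on the past. -/
lemma Sset_congr_mem {ω ω' : ℝ → ℝ} {t : ℝ}
    (hag : ∀ u ∈ Set.Icc (0:ℝ) t, ω' u = ω u) {s : ℝ} (hst : s ≤ t)
    (hs : s ∈ Sset T L₂ ω') : s ∈ Sset T L₂ ω := by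
  refine ⟨hs.1, ?_⟩
  have h2 := hs.2
  rwa [mstar_congr hag hst, hag s ⟨hs.1.1, hst⟩] at h2

lemma Sset_inter_congr {ω ω' : ℝ → ℝ} {t : ℝ}
    (hag : ∀ u ∈ Set.Icc (0:ℝ) t, ω' u = ω u) {s : ℝ} (hst : s ≤ t) :
    s ∈ Sset T L₂ ω' ↔ s ∈ Sset T L₂ ω :=
  ⟨Sset_congr_mem hag hst, Sset_congr_mem (fun u hu => (hag u hu).symm) hst⟩

/-- σ* is a stopping time on `OmegaL`. -/
lemma sigma_isStopping (hT : 0 < T) (hL₁ : 0 < L₁) (hL₂ : 0 < L₂) :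
    IsStoppingTime T (OmegaL T L₁ L₂) (sigmaStar T (fun s _ => L₂ * (T - s))) := by
  constructor
  · intro ω hω
    rw [sigmaStar_eq_sInf]
    exact sigma_mem_Icc hT.le hL₁.le hω
  · intro ω hω t' ht' hle ω' hω' hag
    rw [sigmaStar_eq_sInf] at *
    set σ := sInf (Sset T L₂ ω) with hσ
    have hmem : σ ∈ Sset T L₂ ω := sigma_mem_Sset hT.le hL₁ hL₂ hω
    have hmem' : σ ∈ Sset T L₂ ω' := (Sset_inter_congr hag hle).2 hmem
    apply le_antisymm (csInf_le (Sset_bddBelow ω') hmem')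
    apply le_csInf ⟨σ, hmem'⟩
    intro s hs
    by_contra hlt
    push_neg at hlt
    have : s ∈ Sset T L₂ ω := (Sset_inter_congr hag (hlt.le.trans hle)).1 hs
    exact absurd (csInf_le (Sset_bddBelow ω) this) (not_le.2 hlt)

/-- σ* is admissible at `(t,ω)` when `t ≤ σ*(ω)`. -/
lemma sigma_ge_t (hT : 0 < T) (hL₁ : 0 < L₁) (hL₂ : 0 < L₂)
    {ω : ℝ → ℝ} (hω : ω ∈ OmegaL T L₁ L₂) {t : ℝ}
    (hσ : t ≤ sInf (Sset T L₂ ω))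
    {ω' : ℝ → ℝ} (hω' : ω' ∈ Hist (OmegaL T L₁ L₂) t ω) :
    t ≤ sInf (Sset T L₂ ω') := by
  apply le_csInf (Sset_nonempty hT.le hL₁.le hω'.1)
  intro s hs
  by_contra hlt
  push_neg at hlt
  have : s ∈ Sset T L₂ ω := (Sset_inter_congr hω'.2 hlt.le).1 hs
  exact absurd (hσ.trans (csInf_le (Sset_bddBelow ω) this)) (not_le.2 hlt)

/-- The regret of σ* equals `L₂(T-σ*(ω'))`. -/
lemma regret_at_sigma (hT : 0 < T) (hL₁ : 0 < L₁) (hL₂ : 0 < L₂)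
    {ω' : ℝ → ℝ} (hω' : ω' ∈ OmegaL T L₁ L₂) :
    regret (fun s _ => L₂ * (T - s)) (sigmaStar T (fun s _ => L₂ * (T - s))) ω'
      = L₂ * (T - sInf (Sset T L₂ ω')) := by
  have hIcc := sigma_mem_Icc hT.le hL₁.le hω' (L₂ := L₂)
  have h1 := (sigma_mem_Sset hT.le hL₁ hL₂ hω').2
  have h2 := gap_le_of_le_sigma hT hL₁ hL₂ hω' hIcc le_rfl
  unfold regret
  rw [sigmaStar_eq_sInf]
  have : Mstar ω' (sInf (Sset T L₂ ω')) - ω' (sInf (Sset T L₂ ω'))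
      = L₂ * (T - sInf (Sset T L₂ ω')) := le_antisymm h2 h1
  rw [this, max_self]

lemma le_worstRegret {Ω : Set (ℝ → ℝ)} {ψ : ℝ → (ℝ → ℝ) → ℝ} {t : ℝ} {ω ω' : ℝ → ℝ}
    {τ : (ℝ → ℝ) → ℝ} (h : ω' ∈ Hist Ω t ω) :
    ENNReal.ofReal (regret ψ τ ω') ≤ worstRegret Ω ψ t ω τ :=
  le_iSup₂ (f := fun ω'' (_ : ω'' ∈ Hist Ω t ω) => ENNReal.ofReal (regret ψ τ ω'')) ω' h

lemma worstRegret_le {Ω : Set (ℝ → ℝ)} {ψ : ℝ → (ℝ → ℝ) → ℝ} {t : ℝ} {ω : ℝ → ℝ}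
    {τ : (ℝ → ℝ) → ℝ} {c : ENNReal} (h : ∀ ω' ∈ Hist Ω t ω, ENNReal.ofReal (regret ψ τ ω') ≤ c) :
    worstRegret Ω ψ t ω τ ≤ c :=
  iSup₂_le h

theorem stmt18_aux (T : ℝ) (hT : 0 < T) (L₁ L₂ : ℝ) (hL₁ : 0 < L₁) (hL₂ : 0 < L₂)
    (t : ℝ) (ht : t ∈ Set.Icc 0 T) (ω : ℝ → ℝ) (hω : ω ∈ OmegaL T L₁ L₂)
    (hσ : t ≤ sigmaStar T (fun s _ => L₂ * (T - s)) ω) :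
    (⨅ τ ∈ {τ | IsStoppingTime T (OmegaL T L₁ L₂) τ ∧
        ∀ ω' ∈ Hist (OmegaL T L₁ L₂) t ω, t ≤ τ ω'},
      worstRegret (OmegaL T L₁ L₂) (fun s _ => L₂ * (T - s)) t ω τ)
      = worstRegret (OmegaL T L₁ L₂) (fun s _ => L₂ * (T - s)) t ω
          (sigmaStar T (fun s _ => L₂ * (T - s))) ∧
    worstRegret (OmegaL T L₁ L₂) (fun s _ => L₂ * (T - s)) t ω
        (sigmaStar T (fun s _ => L₂ * (T - s)))
      = ENNReal.ofReal (L₂ / (L₁ + L₂) * (Mstar ω t - ω t)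
          + L₁ / (L₁ + L₂) * (L₂ * (T - t))) := by
  obtain ⟨ht0, htT⟩ := ht
  set ψ : ℝ → (ℝ → ℝ) → ℝ := fun s _ => L₂ * (T - s) with hψ
  set Ω : Set (ℝ → ℝ) := OmegaL T L₁ L₂ with hΩ
  set D := Mstar ω t - ω t with hD
  have hsum : (0:ℝ) < L₁ + L₂ := by linarith
  set σb := (L₂ * T + L₁ * t - D) / (L₁ + L₂) with hσb
  have hD0 : 0 ≤ D := gap_nonneg hL₁.le hω ht0 htT
  rw [sigmaStar_eq_sInf] at hσ
  have hDle : D ≤ L₂ * (T - t) := gap_le_of_le_sigma hT hL₁ hL₂ hω ⟨ht0, htT⟩ hσ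
  have htσb : t ≤ σb := by rw [hσb, le_div_iff₀ hsum]; nlinarith
  have hσbT : σb ≤ T := by rw [hσb, div_le_iff₀ hsum]; nlinarith
  set V := L₂ / (L₁ + L₂) * D + L₁ / (L₁ + L₂) * (L₂ * (T - t)) with hV
  have hVeq : L₂ * (T - σb) = V := by rw [hV, hσb]; field_simp; ring
  have hσbgap : L₂ * (T - σb) = D + L₁ * (σb - t) := by rw [hσb]; field_simp; ring
  -- the worst path ωm
  set ωm := ray ω t (-L₁) with hωm
  have hωmΩ : ωm ∈ OmegaL T L₁ L₂ := ray_mem hω ht0 htT le_rfl (by linarith)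
  have hωmag : ∀ s ∈ Set.Icc (0:ℝ) t, ωm s = ω s := fun s hs => ray_eq_left hs.2
  have hωmH : ωm ∈ Hist Ω t ω := ⟨hωmΩ, hωmag⟩
  have hgapm : ∀ s, t ≤ s → s ≤ T → Mstar ωm s - ωm s = D + L₁ * (s - t) := by
    intro s hts hsT
    rw [hωm, mstar_ray hL₁.le hω hωmΩ ht0 (by linarith) hts hsT, ray_eq_right hts, hD]
    ring
  have hσm : sInf (Sset T L₂ ωm) = σb := by
    apply le_antisymm
    · apply csInf_le (Sset_bddBelow ωm)
      refine ⟨⟨ht0.trans htσb, hσbT⟩, ?_⟩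
      rw [hgapm σb htσb hσbT]
      linarith [hσbgap]
    · apply le_csInf (Sset_nonempty hT.le hL₁.le hωmΩ)
      intro s hs
      rcases le_or_gt t s with hts | hst
      · have h2 := hs.2
        rw [hgapm s hts hs.1.2] at h2
        rw [hσb, div_le_iff₀ hsum]
        nlinarith
      · exfalso
        have h3 : s ∈ Sset T L₂ ω := Sset_congr_mem hωmag hst.le hs
        have h4 := csInf_le (Sset_bddBelow ω) h3
        linarith
  -- the regret of σ* is at most V on every history
  have hregle : ∀ ω' ∈ Hist Ω t ω, regret ψ (sigmaStar T ψ) ω' ≤ V := by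
    intro ω' hω'
    rw [hψ, regret_at_sigma hT hL₁ hL₂ hω'.1]
    have htσ' : t ≤ sInf (Sset T L₂ ω') := sigma_ge_t hT hL₁ hL₂ hω hσ hω'
    set σ' := sInf (Sset T L₂ ω') with hσ'
    have hσ'I : σ' ∈ Set.Icc 0 T := sigma_mem_Icc hT.le hL₁.le hω'.1
    have h1 := (sigma_mem_Sset hT.le hL₁ hL₂ hω'.1).2
    have hg := gapGrowth hL₁.le hω'.1 ht0 htσ' hσ'I.2
    have hgt : Mstar ω' t - ω' t = D := by
      rw [mstar_congr hω'.2 le_rfl, hω'.2 t ⟨ht0, le_rfl⟩, hD]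
    rw [hgt] at hg
    have key : L₂ * (T - σ') ≤ D + L₁ * (σ' - t) := h1.trans hg
    have h5 : L₂ * (T - σ') * (L₁ + L₂) ≤ V * (L₁ + L₂) := by
      rw [hV]
      field_simp
      nlinarith [mul_le_mul_of_nonneg_left key hL₂.le]
    exact le_of_mul_le_mul_right h5 hsum
  have hvm : regret ψ (sigmaStar T ψ) ωm = V := by
    rw [hψ, regret_at_sigma hT hL₁ hL₂ hωmΩ, hσm, hVeq]
  -- worst regret of σ* equals V
  have hval : worstRegret Ω ψ t ω (sigmaStar T ψ) = ENNReal.ofReal V := by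
    apply le_antisymm
    · exact worstRegret_le fun ω' hω' => ENNReal.ofReal_le_ofReal (hregle ω' hω')
    · have h6 := le_worstRegret (ψ := ψ) (τ := sigmaStar T ψ) hωmH
      rwa [hvm] at h6
  -- lower bound for any admissible stopping time
  have hlow : ∀ τ, IsStoppingTime T Ω τ → (∀ ω' ∈ Hist Ω t ω, t ≤ τ ω') →
      ENNReal.ofReal V ≤ worstRegret Ω ψ t ω τ := by
    intro τ hτ hadm
    set r := τ ωm with hr
    have hrI : r ∈ Set.Icc 0 T := hτ.1 ωm hωmΩ
    have htr : t ≤ r := hadm ωm hωmH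
    rcases le_or_gt σb r with hbr | hrb
    · have hreg : V ≤ regret ψ τ ωm := by
        have h7 := hgapm r htr hrI.2
        have h8 : V ≤ Mstar ωm r - ωm r := by
          rw [h7]; nlinarith [hVeq, hσbgap]
        exact h8.trans (le_max_left _ _)
      exact le_trans (ENNReal.ofReal_le_ofReal hreg) (le_worstRegret hωmH)
    · set ωp := ray ωm r L₂ with hωp
      have hωpΩ : ωp ∈ OmegaL T L₁ L₂ := ray_mem hωmΩ hrI.1 hrI.2 (by linarith) le_rfl
      have hagr : ∀ s ∈ Set.Icc (0:ℝ) r, ωp s = ωm s := fun s hs => ray_eq_left hs.2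
      have hωpH : ωp ∈ Hist Ω t ω :=
        ⟨hωpΩ, fun s hs => (hagr s ⟨hs.1, hs.2.trans htr⟩).trans (hωmag s hs)⟩
      have hτp : τ ωp = r := hτ.2 ωm hωmΩ r hrI le_rfl ωp hωpΩ hagr
      have hreg : V ≤ regret ψ τ ωp := by
        have h9 : ψ (τ ωp) ωp = L₂ * (T - r) := by rw [hτp]
        have h10 : V ≤ L₂ * (T - r) := by nlinarith [hVeq]
        exact h10.trans (h9 ▸ le_max_right _ _)
      exact le_trans (ENNReal.ofReal_le_ofReal hreg) (le_worstRegret hωpH)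
  refine ⟨?_, by rw [hval]⟩
  apply le_antisymm
  · have hmem : sigmaStar T ψ ∈ {τ | IsStoppingTime T Ω τ ∧
        ∀ ω' ∈ Hist Ω t ω, t ≤ τ ω'} := by
      refine ⟨sigma_isStopping hT hL₁ hL₂, fun ω' hω' => ?_⟩
      rw [hψ, sigmaStar_eq_sInf]
      exact sigma_ge_t hT hL₁ hL₂ hω hσ hω'
    exact iInf₂_le (sigmaStar T ψ) hmem
  · rw [hval]
    exact le_iInf₂ fun τ hτ => hlow τ hτ.1 hτ.2
end Aux

/-- Example 2: in the Lipschitz corridor `Ω` with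
`ψ(s,ω) = L₂(T − s)`, for every `(t,ω)` with `σ*(ω) ≥ t`, the optimal
worst-case estimated regret equals the convex combination
`[L₂/(L₁+L₂)](X*_t(ω) − X_t(ω)) + [L₁/(L₁+L₂)] L₂ (T − t)`. -/
theorem stmt18 (T : ℝ) (hT : 0 < T) (L₁ L₂ : ℝ) (hL₁ : 0 < L₁) (hL₂ : 0 < L₂)
    (t : ℝ) (ht : t ∈ Set.Icc 0 T) (ω : ℝ → ℝ) (hω : ω ∈ OmegaL T L₁ L₂)
    (hσ : t ≤ sigmaStar T (fun s _ => L₂ * (T - s)) ω) :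
    (⨅ τ ∈ {τ | IsStoppingTime T (OmegaL T L₁ L₂) τ ∧
        ∀ ω' ∈ Hist (OmegaL T L₁ L₂) t ω, t ≤ τ ω'},
      worstRegret (OmegaL T L₁ L₂) (fun s _ => L₂ * (T - s)) t ω τ)
      = worstRegret (OmegaL T L₁ L₂) (fun s _ => L₂ * (T - s)) t ω
          (sigmaStar T (fun s _ => L₂ * (T - s))) ∧
    worstRegret (OmegaL T L₁ L₂) (fun s _ => L₂ * (T - s)) t ω
        (sigmaStar T (fun s _ => L₂ * (T - s)))
      = ENNReal.ofReal (L₂ / (L₁ + L₂) * (Mstar ω t - ω t)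
          + L₁ / (L₁ + L₂) * (L₂ * (T - t))) :=
  stmt18_aux T hT L₁ L₂ hL₁ hL₂ t ht ω hω hσ

end SellingRegret

end
end

section
/- Let L₁, L₂ > 0, let Ω be the set of ω ∈ C([0,T],ℝ) such that −L₁(t−s) ≤ ω(t) − ω(s) ≤ L₂(t−s) for all 0 ≤ s < t ≤ T, and let ψ(s,ω) = L₂(T−s). Then the deterministic stopping time τ̂ ≡ L₂T/(L₁+L₂) is optimal with respect to 𝒜(0,ω) for every ω ∈ Ω: for every ω ∈ Ω, X*_{τ̂}(ω) − X_{τ̂}(ω) ≤ L₁L₂T/(L₁+L₂), hence ℛ(0,ω;τ̂) = L₁L₂T/(L₁+L₂) ≤ ℛ(0,ω;τ) for every stopping time τ. -/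
open Set

noncomputable section

namespace SellingRegret

private lemma mstar_sub_le (T L₁ L₂ a : ℝ) (hL₁ : 0 ≤ L₁) (ha0 : 0 ≤ a) (haT : a ≤ T)
    (ω : ℝ → ℝ) (hω : ω ∈ OmegaL T L₁ L₂) :
    Mstar ω a - ω a ≤ L₁ * a := by
  have h : Mstar ω a ≤ ω a + L₁ * a := by
    refine csSup_le ⟨ω 0, 0, ⟨le_refl 0, ha0⟩, rfl⟩ ?_
    rintro x ⟨s, ⟨hs0, hsa⟩, rfl⟩
    have := (hω s a hs0 hsa haT).1
    nlinarith
  linarith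

/-- Example 2: in the Lipschitz corridor `Ω` with
`ψ(s,ω) = L₂(T − s)`, the deterministic stopping time `τ̂ ≡ L₂T/(L₁+L₂)` is
optimal with respect to `𝒜(0,ω)` for every `ω ∈ Ω`:
`X*_{τ̂}(ω) − X_{τ̂}(ω) ≤ L₁L₂T/(L₁+L₂)`, hence
`ℛ(0,ω;τ̂) = L₁L₂T/(L₁+L₂) ≤ ℛ(0,ω;τ)` for every stopping time `τ`. -/
theorem stmt19 (T : ℝ) (hT : 0 < T) (L₁ L₂ : ℝ) (hL₁ : 0 < L₁) (hL₂ : 0 < L₂)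
    (ω : ℝ → ℝ) (hω : ω ∈ OmegaL T L₁ L₂) :
    Mstar ω (L₂ * T / (L₁ + L₂)) - ω (L₂ * T / (L₁ + L₂))
      ≤ L₁ * L₂ * T / (L₁ + L₂) ∧
    worstRegret (OmegaL T L₁ L₂) (fun s _ => L₂ * (T - s)) 0 ω
        (fun _ => L₂ * T / (L₁ + L₂))
      = ENNReal.ofReal (L₁ * L₂ * T / (L₁ + L₂)) ∧
    ∀ τ, IsStoppingTime T (OmegaL T L₁ L₂) τ →
      worstRegret (OmegaL T L₁ L₂) (fun s _ => L₂ * (T - s)) 0 ω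
          (fun _ => L₂ * T / (L₁ + L₂))
        ≤ worstRegret (OmegaL T L₁ L₂) (fun s _ => L₂ * (T - s)) 0 ω τ := by
  set a := L₂ * T / (L₁ + L₂) with ha
  set R := L₁ * L₂ * T / (L₁ + L₂) with hRdef
  have hsum : 0 < L₁ + L₂ := by linarith
  have ha0 : 0 ≤ a := by positivity
  have haT : a ≤ T := by
    rw [ha, div_le_iff₀ hsum]; nlinarith
  have hR0 : 0 ≤ R := by positivity
  have hRa : L₁ * a = R := by rw [ha, hRdef]; field_simp
  have hpsi : L₂ * (T - a) = R := by rw [ha, hRdef]; field_simp; ring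
  have key : ∀ ω' ∈ OmegaL T L₁ L₂, Mstar ω' a - ω' a ≤ R := by
    intro ω' hω'
    calc Mstar ω' a - ω' a ≤ L₁ * a := mstar_sub_le T L₁ L₂ a hL₁.le ha0 haT ω' hω'
    _ = R := hRa
  have hself : ω ∈ Hist (OmegaL T L₁ L₂) 0 ω := ⟨hω, fun s _ => rfl⟩
  have hregconst : ∀ ω' ∈ Hist (OmegaL T L₁ L₂) 0 ω,
      regret (fun s _ => L₂ * (T - s)) (fun _ => a) ω' = R := by
    intro ω' hω'
    have h1 : Mstar ω' a - ω' a ≤ R := key ω' hω'.1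
    simp only [regret]
    rw [hpsi]
    exact max_eq_right h1
  have heq : worstRegret (OmegaL T L₁ L₂) (fun s _ => L₂ * (T - s)) 0 ω (fun _ => a)
      = ENNReal.ofReal R := by
    apply le_antisymm
    · refine iSup₂_le fun ω' hω' => ?_
      rw [hregconst ω' hω']
    · refine le_iSup₂_of_le ω hself ?_
      rw [hregconst ω hself]
  refine ⟨key ω hω, heq, fun τ hτ => ?_⟩
  rw [heq]
  set ωd : ℝ → ℝ := fun s => ω 0 - L₁ * s with hωd_def
  have hωd : ωd ∈ OmegaL T L₁ L₂ := by
    intro s t hs hst htT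
    constructor
    · simp only [hωd_def]; ring_nf; nlinarith
    · simp only [hωd_def]; nlinarith
  have hmem : ωd ∈ Hist (OmegaL T L₁ L₂) 0 ω := by
    refine ⟨hωd, fun s hs => ?_⟩
    have hs0 : s = 0 := le_antisymm hs.2 hs.1
    simp [hs0, hωd_def]
  set t₃ := τ ωd with ht₃def
  have ht₃ : t₃ ∈ Set.Icc 0 T := hτ.1 ωd hωd
  have hMd : ω 0 ≤ Mstar ωd t₃ := by
    apply le_csSup
    · refine ⟨ω 0, ?_⟩
      rintro x ⟨s, ⟨hs0, _⟩, rfl⟩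
      simp only [hωd_def]; nlinarith
    · exact ⟨0, ⟨le_refl 0, ht₃.1⟩, by simp [hωd_def]⟩
  have hreg : R ≤ regret (fun s _ => L₂ * (T - s)) τ ωd := by
    rcases le_total t₃ a with h | h
    · refine le_trans ?_ (le_max_right _ _)
      show R ≤ L₂ * (T - t₃)
      have : L₂ * (T - a) ≤ L₂ * (T - t₃) := by nlinarith
      linarith [hpsi]
    · refine le_trans ?_ (le_max_left _ _)
      show R ≤ Mstar ωd t₃ - ωd t₃
      have h1 : L₁ * a ≤ L₁ * t₃ := by nlinarith
      have h2 : ωd t₃ = ω 0 - L₁ * t₃ := rfl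
      linarith [hMd, hRa]
  exact le_iSup₂_of_le ωd hmem (ENNReal.ofReal_le_ofReal hreg)


end SellingRegret

end
end
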